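/- arXiv:1304.4117 — 3 statements merged into one kernel-verified Lean document; each statement's English description precedes it below -/
import Mathlib

section
/- Let G be a discrete group and μ a probability measure on G. Then the following are equivalent: (i) for every finite subset K ⊆ G, sup_{x∈G} μ^{⋆n}(Kx⁻¹) → 0 as n → ∞; (ii) for every f ∈ c₀(G), ‖f ⋆ μ^{⋆n}‖_∞ → 0 as n → ∞ (i.e., the convolution operators μ^{⋆n} on c₀(G) converge to zero in the strong operator topology). -/
open Filter Topology
open scoped Classical

variable {G : Type*}

/-- Convolution of two summable "measures" (functions) on a discrete group:
`(ν ⋆ μ)(g) = ∑_{a·b=g} ν(a) μ(b)`. -/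
noncomputable def mconv [Group G] (ν μ : G → ℝ) : G → ℝ :=
  fun g => ∑' a : G, ν a * μ (a⁻¹ * g)

/-- The `n`-th convolution power of `μ`, with `convPow μ 0 = δ_e` and `convPow μ 1 = μ`. -/
noncomputable def convPow [Group G] (μ : G → ℝ) : ℕ → G → ℝ
  | 0 => fun g => if g = 1 then 1 else 0
  | n + 1 => mconv (convPow μ n) μ

/-- `μ` is a probability measure on the discrete group `G`. -/
def IsProbMeas [Group G] (μ : G → ℝ) : Prop :=
  (∀ g, 0 ≤ μ g) ∧ HasSum μ 1

/-- `μ` is irreducible: every point is charged by some convolution power `μ^{⋆n}`, `n ≥ 1`. -/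
def MeasIrreducible [Group G] (μ : G → ℝ) : Prop :=
  ∀ g : G, ∃ n : ℕ, 1 ≤ n ∧ 0 < convPow μ n g

/-- The convolution action of a measure `μ` on a function `f ∈ c₀(G)`:
`(f ⋆ μ)(g) = ∑_h f(g·h) μ(h)`. -/
noncomputable def actConv [Group G] (f : G → ℂ) (μ : G → ℝ) : G → ℂ :=
  fun g => ∑' h : G, f (g * h) * (μ h : ℂ)

/-- A function on a discrete space vanishes at infinity iff it tends to `0`
along the cofinite filter. -/
def ZeroAtInfty (f : G → ℂ) : Prop := Tendsto f cofinite (𝓝 0)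

/-!
Both conditions are equivalent to `‖μ^{⋆n}‖_∞ → 0`. For (i) because
`sup_x μ^{⋆n}({e} x⁻¹) = ‖μ^{⋆n}‖_∞` and `sup_x μ^{⋆n}(K x⁻¹) ≤ #K ‖μ^{⋆n}‖_∞`. For (ii), testing on `δ_e`
gives `‖δ_e ⋆ μ^{⋆n}‖_∞ = ‖μ^{⋆n}‖_∞`; conversely, if `|f| ≤ ε` off a finite set `K` and
`|f| ≤ M` everywhere, then `‖f ⋆ ν‖_∞ ≤ ε + M #K ‖ν‖_∞` for every probability measure `ν`.
-/

theorem iSup_apply_inv {α β : Type*} [InvolutiveInv α] [SupSet β] (f : α → β) :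
    ⨆ x, f x⁻¹ = ⨆ x, f x :=
  (Equiv.inv α).iSup_comp

section

variable [Group G]

namespace IsProbMeas

variable {ν : G → ℝ}

theorem summable (hν : IsProbMeas ν) : Summable ν := hν.2.summable

theorem le_one (hν : IsProbMeas ν) (g : G) : ν g ≤ 1 :=
  le_hasSum hν.2 g fun h _ => hν.1 h

theorem bddAbove_range (hν : IsProbMeas ν) : BddAbove (Set.range ν) :=
  ⟨1, Set.forall_mem_range.2 hν.le_one⟩

theorem iSup_nonneg (hν : IsProbMeas ν) : 0 ≤ ⨆ g, ν g :=
  Real.iSup_nonneg hν.1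

theorem sum_le_card_mul_iSup {ι : Type*} (hν : IsProbMeas ν) (K : Finset ι) (φ : ι → G) :
    ∑ k ∈ K, ν (φ k) ≤ K.card * ⨆ g, ν g :=
  (Finset.sum_le_card_nsmul _ _ _ fun _ _ => le_ciSup hν.bddAbove_range _).trans_eq
    (nsmul_eq_mul _ _)

theorem hasSum_mconv_prod {μ : G → ℝ} (hν : IsProbMeas ν) (hμ : IsProbMeas μ) :
    HasSum (fun p : G × G => ν p.2 * μ (p.2⁻¹ * p.1)) 1 := by
  have hprod : HasSum (fun p : G × G => ν p.1 * μ p.2) 1 := by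
    simpa using hν.2.mul hμ.2 (hν.summable.mul_of_nonneg hμ.summable hν.1 hμ.1)
  have hshear := (Equiv.hasSum_iff (Equiv.prodShear (Equiv.refl G) fun a => Equiv.mulLeft a⁻¹)).2
    hprod
  exact (Equiv.hasSum_iff (Equiv.prodComm G G)).1
    (by simpa [Equiv.prodShear, Function.comp_def] using hshear)

theorem mconv {μ : G → ℝ} (hν : IsProbMeas ν) (hμ : IsProbMeas μ) : IsProbMeas (mconv ν μ) := by
  have hsum := hν.hasSum_mconv_prod hμ
  exact ⟨fun g => tsum_nonneg fun a => mul_nonneg (hν.1 a) (hμ.1 _),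
    hsum.prod_fiberwise fun g => (hsum.summable.prod_factor g).hasSum⟩

end IsProbMeas

theorem isProbMeas_convPow {μ : G → ℝ} (hμ : IsProbMeas μ) (n : ℕ) :
    IsProbMeas (convPow μ n) := by
  induction n with
  | zero =>
    refine ⟨fun g => ?_, by simpa [convPow] using hasSum_ite_eq (1 : G) (1 : ℝ)⟩
    simp only [convPow]
    split <;> norm_num
  | succ n ih => exact ih.mconv hμ

theorem hasSum_ite_mul_mem (ν : G → ℝ) (g : G) (K : Finset G) :
    HasSum (fun h => if g * h ∈ K then ν h else 0) (∑ k ∈ K, ν (g⁻¹ * k)) := by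
  rw [← (Equiv.mulLeft g⁻¹).hasSum_iff]
  convert hasSum_sum_of_ne_finset_zero (s := K) (f := fun k => if k ∈ K then ν (g⁻¹ * k) else 0)
    (L := .unconditional G) (fun k hk => if_neg hk) using 1
  · ext k
    simp
  · exact (Finset.sum_congr rfl fun k hk => if_pos hk).symm

theorem norm_actConv_le {ν : G → ℝ} (hν : IsProbMeas ν) {f : G → ℂ} {M ε : ℝ} (K : Finset G)
    (hM : ∀ y, ‖f y‖ ≤ M) (hε₀ : 0 ≤ ε) (hε : ∀ y ∉ K, ‖f y‖ ≤ ε) (g : G) :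
    ‖actConv f ν g‖ ≤ ε + M * ∑ k ∈ K, ν (g⁻¹ * k) := by
  have hdom : ∀ h, ‖f (g * h) * (ν h : ℂ)‖ ≤ ε * ν h + M * (if g * h ∈ K then ν h else 0) := by
    intro h
    rw [norm_mul, Complex.norm_real, Real.norm_of_nonneg (hν.1 h)]
    by_cases hK : g * h ∈ K
    · simp only [hK, if_true]
      nlinarith [hν.1 h, hM (g * h)]
    · simp only [hK, if_false, mul_zero, add_zero]
      exact mul_le_mul_of_nonneg_right (hε _ hK) (hν.1 h)
  have hD : HasSum (fun h => ε * ν h + M * (if g * h ∈ K then ν h else 0))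
      (ε + M * ∑ k ∈ K, ν (g⁻¹ * k)) := by
    simpa using (hν.2.mul_left ε).add ((hasSum_ite_mul_mem ν g K).mul_left M)
  have hsum : Summable fun h => ‖f (g * h) * (ν h : ℂ)‖ :=
    hD.summable.of_nonneg_of_le (fun _ => norm_nonneg _) hdom
  exact (norm_tsum_le_tsum_norm hsum).trans (hasSum_le hdom hsum.hasSum hD)

theorem actConv_single_one (ν : G → ℝ) (g : G) :
    actConv (Pi.single 1 1) ν g = (ν g⁻¹ : ℂ) := by
  rw [actConv, tsum_eq_single g⁻¹ fun h hh => by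
    simp [mul_eq_one_iff_inv_eq, Ne.symm hh]]
  simp

theorem zeroAtInfty_single_one : ZeroAtInfty (Pi.single (1 : G) (1 : ℂ)) :=
  tendsto_nhds_of_eventually_eq <| (eventually_cofinite_ne 1).mono fun _ hg =>
    Pi.single_eq_of_ne hg 1

section Sequences

variable {ν : ℕ → G → ℝ}

theorem tendsto_iSup_sum_mul_inv_iff (hν : ∀ n, IsProbMeas (ν n)) :
    (∀ K : Finset G, Tendsto (fun n => ⨆ x, ∑ k ∈ K, ν n (k * x⁻¹)) atTop (𝓝 0)) ↔
      Tendsto (fun n => ⨆ g, ν n g) atTop (𝓝 0) := by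
  refine ⟨fun h => ?_, fun h K => ?_⟩
  · simpa only [Finset.sum_singleton, one_mul, iSup_apply_inv] using h {1}
  · refine tendsto_of_tendsto_of_tendsto_of_le_of_le tendsto_const_nhds
      (by simpa using h.const_mul (K.card : ℝ))
      (fun n => Real.iSup_nonneg fun x => Finset.sum_nonneg fun k _ => (hν n).1 _)
      (fun n => Real.iSup_le (fun x => (hν n).sum_le_card_mul_iSup K (· * x⁻¹))
        (mul_nonneg K.card.cast_nonneg (hν n).iSup_nonneg))

theorem tendsto_iSup_norm_actConv_of_tendsto (hν : ∀ n, IsProbMeas (ν n))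
    (h : Tendsto (fun n => ⨆ g, ν n g) atTop (𝓝 0)) {f : G → ℂ} (hf : ZeroAtInfty f) :
    Tendsto (fun n => ⨆ g, ‖actConv f (ν n) g‖) atTop (𝓝 0) := by
  have hf' : Tendsto (fun y => ‖f y‖) cofinite (𝓝 0) := by simpa using hf.norm
  obtain ⟨M, hM⟩ := hf'.bddAbove_range_of_cofinite
  replace hM : ∀ y, ‖f y‖ ≤ M := fun y => hM ⟨y, rfl⟩
  have hM₀ : 0 ≤ M := (norm_nonneg _).trans (hM 1)
  refine tendsto_order.2 ⟨fun a ha => Eventually.of_forall fun n =>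
    ha.trans_le (Real.iSup_nonneg fun _ => norm_nonneg _), fun ε hε => ?_⟩
  obtain ⟨K, hK⟩ : ∃ K : Finset G, ∀ y ∉ K, ‖f y‖ ≤ ε / 2 := by
    have hfin := eventually_cofinite.1 (hf'.eventually (ge_mem_nhds (half_pos hε)))
    exact ⟨hfin.toFinset, fun y hy => not_not.1 (by simpa using hy)⟩
  have hlim : Tendsto (fun n => M * K.card * ⨆ g, ν n g) atTop (𝓝 0) := by
    simpa using h.const_mul (M * K.card)
  filter_upwards [hlim.eventually (gt_mem_nhds (half_pos hε))] with n hn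
  have hbound : ∀ g, ‖actConv f (ν n) g‖ ≤ ε / 2 + M * K.card * ⨆ g, ν n g := fun g =>
    calc ‖actConv f (ν n) g‖ ≤ ε / 2 + M * ∑ k ∈ K, ν n (g⁻¹ * k) :=
          norm_actConv_le (hν n) K hM (half_pos hε).le hK g
      _ ≤ ε / 2 + M * K.card * ⨆ g, ν n g := by
          rw [mul_assoc]
          gcongr
          exact (hν n).sum_le_card_mul_iSup K (g⁻¹ * ·)
  calc ⨆ g, ‖actConv f (ν n) g‖ ≤ ε / 2 + M * K.card * ⨆ g, ν n g :=
        Real.iSup_le hbound ((norm_nonneg _).trans (hbound 1))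
    _ < ε := by linarith

theorem tendsto_iSup_norm_actConv_iff (hν : ∀ n, IsProbMeas (ν n)) :
    (∀ f : G → ℂ, ZeroAtInfty f → Tendsto (fun n => ⨆ g, ‖actConv f (ν n) g‖) atTop (𝓝 0)) ↔
      Tendsto (fun n => ⨆ g, ν n g) atTop (𝓝 0) := by
  refine ⟨fun h => ?_, fun h f => tendsto_iSup_norm_actConv_of_tendsto hν h⟩
  have hδ : ∀ n, ⨆ g, ‖actConv (Pi.single 1 1) (ν n) g‖ = ⨆ g, ν n g := fun n => by
    simp only [actConv_single_one, Complex.norm_real, Real.norm_of_nonneg ((hν n).1 _),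
      iSup_apply_inv]
  simpa only [hδ] using h _ zeroAtInfty_single_one

end Sequences

end

/-- For a probability measure `μ` on a discrete group `G`, the
concentration functions `sup_x μ^{⋆n}(K x⁻¹)` tend to `0` for every finite `K`
iff the convolution operators `μ^{⋆n}` on `c₀(G)` tend to zero strongly. -/
theorem concentration_iff_strong_convergence [Group G] (μ : G → ℝ)
    (hμ : IsProbMeas μ) :
    (∀ K : Finset G,
        Tendsto (fun n : ℕ => ⨆ x : G, ∑ k ∈ K, convPow μ n (k * x⁻¹)) atTop (𝓝 0)) ↔
      (∀ f : G → ℂ, ZeroAtInfty f →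
        Tendsto (fun n : ℕ => ⨆ g : G, ‖actConv f (convPow μ n) g‖) atTop (𝓝 0)) :=
  (tendsto_iSup_sum_mul_inv_iff (isProbMeas_convPow hμ)).trans
    (tendsto_iSup_norm_actConv_iff (isProbMeas_convPow hμ)).symm
end

section
/- Let G be an infinite discrete group, let μ be an irreducible probability measure on G, and let ν : G → [0,∞) be a summable function (ν ∈ ℓ¹(G), ν ≥ 0) satisfying ν ⋆ μ = ν, where (ν⋆μ)({g}) = Σ_{a·b=g} ν({a})μ({b}). Then ν = 0. -/
open Filter Topology
open scoped Classical

variable {G : Type*}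

/-!
Since `ν` is non-negative and summable, it tends to `0` at infinity and therefore attains its
maximum `M`. Stationarity writes `ν g` as a `μ(·⁻¹ g)`-average of the values of `ν`, so at a
point where `ν g = M` every `b` with `μ (b⁻¹ g) > 0` also has `ν b = M` (maximum principle).
Iterating along convolution powers and using irreducibility, `ν ≡ M`; a summable constant on an
infinite group is `0`.
-/

lemma exists_forall_le_of_tendsto_cofinite_zero {α : Type*} [Nonempty α] {f : α → ℝ}
    (hf0 : ∀ x, 0 ≤ f x) (hf : Tendsto f cofinite (𝓝 0)) : ∃ x, ∀ y, f y ≤ f x := by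
  by_cases hzero : ∀ x, f x = 0
  · exact ⟨Classical.arbitrary α, fun y => by simp [hzero]⟩
  obtain ⟨x₀, hx₀⟩ := not_forall.mp hzero
  have hpos : 0 < f x₀ := (hf0 x₀).lt_of_ne' hx₀
  have hfin : {y | f x₀ ≤ f y}.Finite := by
    simpa only [not_lt] using eventually_cofinite.mp (hf.eventually (gt_mem_nhds hpos))
  obtain ⟨x, hx, hmax⟩ := Set.exists_max_image _ f hfin ⟨x₀, Set.mem_ofPred.mpr le_rfl⟩
  refine ⟨x, fun y => ?_⟩
  by_cases hy : f x₀ ≤ f y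
  · exact hmax y hy
  · exact (lt_of_not_ge hy).le.trans hx

section Convolution

variable [Group G] {μ ν : G → ℝ}

lemma HasSum.comp_inv_mul {f : G → ℝ} {s : ℝ} (hf : HasSum f s) (g : G) :
    HasSum (fun a => f (a⁻¹ * g)) s :=
  (Equiv.hasSum_iff ((Equiv.inv G).trans (Equiv.mulRight g))).mpr hf

lemma convPow_nonneg (hμ : ∀ g, 0 ≤ μ g) (n : ℕ) (g : G) : 0 ≤ convPow μ n g := by
  induction n generalizing g with
  | zero => simp only [convPow]; positivity
  | succ n ih => exact tsum_nonneg fun a => mul_nonneg (ih a) (hμ _)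

lemma exists_pos_of_mconv_pos (hν : ∀ g, 0 ≤ ν g) (hμ : ∀ g, 0 ≤ μ g) {x : G}
    (hx : 0 < mconv ν μ x) : ∃ a, 0 < ν a ∧ 0 < μ (a⁻¹ * x) := by
  have hne : (fun a => ν a * μ (a⁻¹ * x)) ≠ 0 := fun h0 =>
    hx.ne' (by simp only [mconv, h0, Pi.zero_def, tsum_zero])
  obtain ⟨a, ha⟩ := Function.ne_iff.mp hne
  have hprod : 0 < ν a * μ (a⁻¹ * x) := (mul_nonneg (hν a) (hμ _)).lt_of_ne' ha
  exact ⟨a, pos_of_mul_pos_left hprod (hμ _), pos_of_mul_pos_right hprod (hν a)⟩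

lemma eq_of_mconv_eq_of_le (hμ : IsProbMeas μ) (hν0 : ∀ g, 0 ≤ ν g) (hνs : Summable ν)
    {M : ℝ} (hνM : ∀ g, ν g ≤ M) {g : G} (hg : mconv ν μ g = M) {b : G}
    (hb : 0 < μ (b⁻¹ * g)) : ν b = M := by
  have hμg : HasSum (fun a => μ (a⁻¹ * g)) 1 := hμ.2.comp_inv_mul g
  have hμ1 : ∀ x, μ x ≤ 1 := fun x => le_hasSum hμ.2 x fun y _ => hμ.1 y
  have hνμ : HasSum (fun a => ν a * μ (a⁻¹ * g)) M := by
    refine hg ▸ (Summable.of_nonneg_of_le (fun a => mul_nonneg (hν0 a) (hμ.1 _))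
      (fun a => ?_) hνs).hasSum
    simpa using mul_le_mul_of_nonneg_left (hμ1 (a⁻¹ * g)) (hν0 a)
  -- the defect `M - ν` has vanishing `μ(·⁻¹ g)`-average and is non-negative
  have hdefect : HasSum (fun a => (M - ν a) * μ (a⁻¹ * g)) 0 := by
    simpa [sub_mul] using (hμg.mul_left M).sub hνμ
  have hzero : (M - ν b) * μ (b⁻¹ * g) = 0 := congrFun ((hasSum_zero_iff_of_nonneg fun a =>
    mul_nonneg (sub_nonneg.mpr (hνM a)) (hμ.1 _)).mp hdefect) b
  linarith [(mul_eq_zero.mp hzero).resolve_right hb.ne']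

lemma eq_of_convPow_pos (hμ : IsProbMeas μ) (hν0 : ∀ g, 0 ≤ ν g) (hνs : Summable ν)
    (hstat : mconv ν μ = ν) {M : ℝ} (hνM : ∀ g, ν g ≤ M) (n : ℕ) {g b : G} (hg : ν g = M)
    (hbg : 0 < convPow μ n (b⁻¹ * g)) : ν b = M := by
  induction n generalizing g with
  | zero =>
    have hbg' : b⁻¹ * g = 1 := by
      by_contra hne
      simp [convPow, hne] at hbg
    rwa [inv_mul_eq_one.mp hbg']
  | succ n ih =>
    obtain ⟨c, hc, hμc⟩ := exists_pos_of_mconv_pos (convPow_nonneg hμ.1 n) hμ.1 hbg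
    have hbc : ν (b * c) = M := eq_of_mconv_eq_of_le hμ hν0 hνs hνM
      (by rw [hstat, hg]) (by simpa [mul_inv_rev, mul_assoc] using hμc)
    exact ih hbc (by simpa using hc)

end Convolution

/-- On an infinite discrete group, a non-negative summable `ν` which is
`μ`-stationary (`ν ⋆ μ = ν`) for an irreducible probability measure `μ` must vanish. -/
theorem stationary_vanishes [Group G] [Infinite G] (μ : G → ℝ)
    (hμ : IsProbMeas μ) (hirr : MeasIrreducible μ)
    (ν : G → ℝ) (hν0 : ∀ g, 0 ≤ ν g) (hνs : Summable ν)
    (h : mconv ν μ = ν) :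
    ν = 0 := by
  obtain ⟨g₀, hmax⟩ := exists_forall_le_of_tendsto_cofinite_zero hν0 hνs.tendsto_cofinite_zero
  have hconst : ν = fun _ => ν g₀ := funext fun b => by
    obtain ⟨n, -, hn⟩ := hirr (b⁻¹ * g₀)
    exact eq_of_convPow_pos hμ hν0 hνs h hmax n rfl hn
  have hzero : ν g₀ = 0 := (summable_const_iff (ν g₀)).mp (hconst ▸ hνs)
  rw [hconst, hzero]
  rfl
end

section
/- Let G be an infinite discrete group, let μ be an irreducible probability measure on G, let k ≥ 1, and let ρ : G → [0,∞) be a summable function (ρ ∈ ℓ¹(G), ρ ≥ 0) satisfying ρ ⋆ μ^{⋆k} = ρ. Then ρ = 0. -/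
/-!
Pass to `ℝ≥0∞`-valued functions, where convolution needs no summability bookkeeping. Since
`ρ ⋆ μ^{⋆k} = ρ`, the sum `S = ρ + ρ ⋆ μ + ⋯ + ρ ⋆ μ^{⋆(k-1)}` satisfies `S ⋆ μ = S`, and it has
finite mass. A function of finite mass attains its supremum, and `S ⋆ μ^{⋆n} = S` writes the value
at a maximum as an average of values of `S` with weights `μ^{⋆n}`; irreducibility lets every point
carry weight for some `n`, so `S` is constant, hence zero on an infinite group, and `0 ≤ ρ ≤ S`.
-/

open Filter Topology
open scoped Classical

variable {G : Type*}

open scoped ENNReal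

noncomputable def econv [Group G] (ν μ : G → ℝ≥0∞) : G → ℝ≥0∞ :=
  fun g => ∑' a : G, ν a * μ (a⁻¹ * g)

noncomputable def econvPow [Group G] (μ : G → ℝ≥0∞) : ℕ → G → ℝ≥0∞
  | 0 => fun g => if g = 1 then 1 else 0
  | n + 1 => econv (econvPow μ n) μ

section Convolution

variable [Group G]

lemma econv_econvPow_zero (f μ : G → ℝ≥0∞) : econv f (econvPow μ 0) = f := by
  funext g
  rw [econv, tsum_eq_single g fun a ha => by simp [econvPow, inv_mul_eq_one, ha]]
  simp [econvPow]

lemma tsum_econv (ν μ : G → ℝ≥0∞) : ∑' g, econv ν μ g = (∑' g, ν g) * ∑' g, μ g := by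
  simp only [econv]
  rw [ENNReal.tsum_comm, ← ENNReal.tsum_mul_right]
  refine tsum_congr fun a => ?_
  rw [ENNReal.tsum_mul_left]
  exact congrArg _ ((Equiv.mulLeft a⁻¹).tsum_eq μ)

lemma tsum_econvPow (μ : G → ℝ≥0∞) (n : ℕ) : ∑' g, econvPow μ n g = (∑' g, μ g) ^ n := by
  induction n with
  | zero => simpa only [econvPow, pow_zero] using tsum_ite_eq (1 : G) fun _ => (1 : ℝ≥0∞)
  | succ n ih => rw [econvPow, tsum_econv, ih, pow_succ]

lemma tsum_econvPow_ne_top {μ : G → ℝ≥0∞} (hμ : ∑' g, μ g ≠ ∞) (n : ℕ) :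
    ∑' g, econvPow μ n g ≠ ∞ :=
  tsum_econvPow μ n ▸ ENNReal.pow_ne_top hμ

lemma econv_assoc (f g h : G → ℝ≥0∞) : econv (econv f g) h = econv f (econv g h) := by
  funext x
  simp only [econv]
  calc ∑' a, (∑' b, f b * g (b⁻¹ * a)) * h (a⁻¹ * x)
      = ∑' b, ∑' a, f b * (g (b⁻¹ * a) * h (a⁻¹ * x)) := by
        simp only [← ENNReal.tsum_mul_right, mul_assoc]
        exact ENNReal.tsum_comm
    _ = ∑' b, f b * ∑' c, g c * h (c⁻¹ * (b⁻¹ * x)) := by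
        refine tsum_congr fun b => ?_
        rw [ENNReal.tsum_mul_left, ← (Equiv.mulLeft b).tsum_eq]
        simp [mul_assoc]

lemma econv_econvPow_succ (f μ : G → ℝ≥0∞) (n : ℕ) :
    econv f (econvPow μ (n + 1)) = econv (econv f (econvPow μ n)) μ :=
  (econv_assoc _ _ _).symm

lemma econv_sum {ι : Type*} (s : Finset ι) (F : ι → G → ℝ≥0∞) (μ : G → ℝ≥0∞) :
    econv (∑ i ∈ s, F i) μ = ∑ i ∈ s, econv (F i) μ := by
  funext g
  simp only [econv, Finset.sum_apply, Finset.sum_mul]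
  exact Summable.tsum_finsetSum fun _ _ => ENNReal.summable

lemma econv_econvPow_of_econv_eq {f μ : G → ℝ≥0∞} (h : econv f μ = f) (n : ℕ) :
    econv f (econvPow μ n) = f := by
  induction n with
  | zero => exact econv_econvPow_zero f μ
  | succ n ih => rw [econv_econvPow_succ, ih, h]

lemma econv_sum_range_econvPow {f μ : G → ℝ≥0∞} {k : ℕ} (h : econv f (econvPow μ k) = f) :
    econv (∑ j ∈ Finset.range k, econv f (econvPow μ j)) μ =
      ∑ j ∈ Finset.range k, econv f (econvPow μ j) := by
  simp only [econv_sum, ← econv_econvPow_succ]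
  cases k with
  | zero => rfl
  | succ m => rw [Finset.sum_range_succ, h, Finset.sum_range_succ' _ m, econv_econvPow_zero]

end Convolution

lemma ENNReal.exists_forall_le_of_tsum_ne_top {α : Type*} [Nonempty α] {f : α → ℝ≥0∞}
    (hf : ∑' a, f a ≠ ∞) : ∃ a₀, ∀ a, f a ≤ f a₀ := by
  obtain h0 | hne := eq_or_ne f 0
  · exact ⟨Classical.arbitrary α, fun a => by simp [h0]⟩
  obtain ⟨b, hb⟩ := Function.ne_iff.mp hne
  obtain ⟨a₀, hba₀, hmax⟩ :=
    Set.exists_max_image _ f (ENNReal.finite_const_le_of_tsum_ne_top hf hb) ⟨b, le_refl (f b)⟩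
  refine ⟨a₀, fun a => ?_⟩
  by_cases hba : f b ≤ f a
  · exact hmax a hba
  · exact (not_le.mp hba).le.trans hba₀

section Stationary

variable [Group G]

lemma eq_of_econv_apply_eq_of_le {f Q : G → ℝ≥0∞} {s : ℝ≥0∞} (hs : s ≠ ∞) (hf : ∀ b, f b ≤ s)
    (hQ : ∑' g, Q g = 1) {g a : G} (hg : econv f Q g = s) (ha : 0 < Q (a⁻¹ * g)) : f a = s := by
  by_contra hne
  have hQa : Q (a⁻¹ * g) ≠ ∞ := ENNReal.ne_top_of_tsum_ne_top (hQ ▸ ENNReal.one_ne_top) _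
  have hQg : ∑' b, Q (b⁻¹ * g) = 1 := by
    rw [← hQ]
    exact ((Equiv.inv G).trans (Equiv.mulRight g)).tsum_eq Q
  have : econv f Q g < s :=
    calc econv f Q g < ∑' b, s * Q (b⁻¹ * g) :=
          ENNReal.tsum_lt_tsum (i := a) (show econv f Q g ≠ ∞ from hg ▸ hs)
            (fun b => mul_le_mul_left (hf b) _)
            (ENNReal.mul_lt_mul_left ha.ne' hQa ((hf a).lt_of_ne hne))
      _ = s := by rw [ENNReal.tsum_mul_left, hQg, mul_one]
  exact this.ne hg

lemma eq_zero_of_econv_eq_self [Infinite G] {P f : G → ℝ≥0∞} (hP : ∑' g, P g = 1)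
    (hirr : ∀ g, ∃ n, 0 < econvPow P n g) (hf : ∑' g, f g ≠ ∞) (h : econv f P = f) :
    f = 0 := by
  obtain ⟨g₀, hmax⟩ := ENNReal.exists_forall_le_of_tsum_ne_top hf
  have hconst : ∀ a, f a = f g₀ := fun a => by
    obtain ⟨n, hn⟩ := hirr (a⁻¹ * g₀)
    exact eq_of_econv_apply_eq_of_le (ENNReal.ne_top_of_tsum_ne_top hf g₀) hmax
      (by rw [tsum_econvPow, hP, one_pow]) (congr_fun (econv_econvPow_of_econv_eq h n) g₀) hn
  have hg₀ : f g₀ = 0 := by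
    by_contra hne
    exact hf ((tsum_congr hconst).trans (ENNReal.tsum_const_eq_top_of_ne_zero hne))
  exact funext fun a => (hconst a).trans hg₀

lemma eq_zero_of_econv_econvPow_eq_self [Infinite G] {P R : G → ℝ≥0∞} (hP : ∑' g, P g = 1)
    (hirr : ∀ g, ∃ n, 0 < econvPow P n g) (hR : ∑' g, R g ≠ ∞) {k : ℕ} (hk : 1 ≤ k)
    (h : econv R (econvPow P k) = R) : R = 0 := by
  set S := ∑ j ∈ Finset.range k, econv R (econvPow P j)
  have hS_mass : ∑' g, S g = k * ∑' g, R g := by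
    simp only [S, Finset.sum_apply]
    rw [Summable.tsum_finsetSum fun _ _ => ENNReal.summable]
    simp [tsum_econv, tsum_econvPow, hP]
  have hS : S = 0 := eq_zero_of_econv_eq_self hP hirr
    (hS_mass ▸ ENNReal.mul_ne_top (ENNReal.natCast_ne_top k) hR) (econv_sum_range_econvPow h)
  have hRS : R ≤ S :=
    calc R = econv R (econvPow P 0) := (econv_econvPow_zero R P).symm
      _ ≤ S := Finset.single_le_sum (f := fun j => econv R (econvPow P j))
          (fun _ _ => zero_le) (Finset.mem_range.mpr hk)
  exact le_antisymm (hS ▸ hRS) zero_le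

end Stationary

section RealValued

variable [Group G]

lemma mconv_toReal {ν σ : G → ℝ≥0∞} (hν : ∀ g, ν g ≠ ∞) (hσ : ∀ g, σ g ≠ ∞) :
    mconv (fun g => (ν g).toReal) (fun g => (σ g).toReal) = fun g => (econv ν σ g).toReal := by
  funext g
  rw [econv, ENNReal.tsum_toReal_eq fun a => ENNReal.mul_ne_top (hν a) (hσ _)]
  simp only [mconv, ENNReal.toReal_mul]

lemma convPow_toReal {P : G → ℝ≥0∞} (hP : ∑' g, P g ≠ ∞) (n : ℕ) :
    convPow (fun g => (P g).toReal) n = fun g => (econvPow P n g).toReal := by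
  induction n with
  | zero =>
    funext g
    by_cases hg : g = 1 <;> simp [convPow, econvPow, hg]
  | succ n ih =>
    rw [convPow, ih, econvPow, mconv_toReal
      (ENNReal.ne_top_of_tsum_ne_top (tsum_econvPow_ne_top hP n))
      (ENNReal.ne_top_of_tsum_ne_top hP)]

lemma econv_eq_of_mconv_toReal_eq {ν σ : G → ℝ≥0∞} (hν : ∑' g, ν g ≠ ∞) (hσ : ∑' g, σ g ≠ ∞)
    (h : mconv (fun g => (ν g).toReal) (fun g => (σ g).toReal) = fun g => (ν g).toReal) :
    econv ν σ = ν := by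
  rw [mconv_toReal (ENNReal.ne_top_of_tsum_ne_top hν) (ENNReal.ne_top_of_tsum_ne_top hσ)] at h
  have hνσ : ∑' g, econv ν σ g ≠ ∞ := tsum_econv ν σ ▸ ENNReal.mul_ne_top hν hσ
  funext g
  exact (ENNReal.toReal_eq_toReal_iff' (ENNReal.ne_top_of_tsum_ne_top hνσ g)
    (ENNReal.ne_top_of_tsum_ne_top hν g)).mp (congr_fun h g)

end RealValued

/-- On an infinite discrete group, a non-negative summable `ρ` which is
stationary for some power `μ^{⋆k}` (`k ≥ 1`) of an irreducible probability measure `μ`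
must vanish. -/
theorem stationary_for_power_vanishes [Group G] [Infinite G] (μ : G → ℝ)
    (hμ : IsProbMeas μ) (hirr : MeasIrreducible μ) (k : ℕ) (hk : 1 ≤ k)
    (ρ : G → ℝ) (hρ0 : ∀ g, 0 ≤ ρ g) (hρs : Summable ρ)
    (h : mconv ρ (convPow μ k) = ρ) :
    ρ = 0 := by
  obtain ⟨hμ0, hμ1⟩ := hμ
  set P : G → ℝ≥0∞ := fun g => ENNReal.ofReal (μ g)
  set R : G → ℝ≥0∞ := fun g => ENNReal.ofReal (ρ g)
  have hμP : μ = fun g => (P g).toReal := funext fun g => (ENNReal.toReal_ofReal (hμ0 g)).symm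
  have hρR : ρ = fun g => (R g).toReal := funext fun g => (ENNReal.toReal_ofReal (hρ0 g)).symm
  have hP : ∑' g, P g = 1 := by
    rw [← ENNReal.ofReal_tsum_of_nonneg hμ0 hμ1.summable, hμ1.tsum_eq, ENNReal.ofReal_one]
  have hPfin : ∑' g, P g ≠ ∞ := hP ▸ ENNReal.one_ne_top
  have hR : ∑' g, R g ≠ ∞ := by
    rw [← ENNReal.ofReal_tsum_of_nonneg hρ0 hρs]
    exact ENNReal.ofReal_ne_top
  have hirrP : ∀ g, ∃ n, 0 < econvPow P n g := fun g => by
    obtain ⟨n, -, hn⟩ := hirr g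
    rw [hμP, convPow_toReal hPfin] at hn
    exact ⟨n, (ENNReal.toReal_pos_iff.mp hn).1⟩
  have hRk : econv R (econvPow P k) = R := by
    rw [hμP, convPow_toReal hPfin, hρR] at h
    exact econv_eq_of_mconv_toReal_eq hR (tsum_econvPow_ne_top hPfin k) h
  rw [hρR, eq_zero_of_econv_econvPow_eq_self hP hirrP hR hk hRk]
  rfl
end
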